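/- arXiv:1710.08068 — 2 statements merged into one kernel-verified Lean document; each statement's English description precedes it below -/
import Mathlib

section
/- Let B be an abelian category in which every object is noetherian, and let C be a full, replete subcategory containing 0 that is closed under extensions and under quotients. Then (C, C⊥) is a torsion pair on B, where C⊥ is the full subcategory of objects N with Hom_B(C',N) = 0 for all C' ∈ C. In particular, for every object M of B there is a short exact sequence 0 → X → M → Y → 0 with X ∈ C and Hom_B(C',Y) = 0 for all C' ∈ C. -/
/-!
Common set-up: Rosenberg's spectrum of an abelian category.

For objects `X Y` of an abelian category `C`, `X ≺ Y` means that `X` is a subquotient of a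
finite direct sum of copies of `Y`; `X ≈ Y` means `X ≺ Y ≺ X`.  A nonzero object `P` is
*spectral* if it is `≈`-equivalent to each of its nonzero subobjects, and the spectrum
`𝔖pec(C)` is the collection of `≈`-equivalence classes `⟨P⟩` of spectral objects.
`Supp(M) = {⟨P⟩ : P ≺ M}` and `Ass(M) = {⟨P⟩ : some spectral object of class ⟨P⟩ embeds in M}`.
-/

open CategoryTheory CategoryTheory.Limits

attribute [local instance] CategoryTheory.Abelian.hasFiniteBiproducts
attribute [local instance] CategoryTheory.Limits.hasBinaryBiproducts_of_finite_biproducts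

universe v u

namespace RosenbergSpec

variable (C : Type u) [Category.{v} C] [Abelian C]

/-- `X ≺ Y` : `X` is a subquotient of a finite direct sum of copies of `Y`. -/
def Prec (X Y : C) : Prop :=
  ∃ n : ℕ, 0 < n ∧ ∃ (S : C) (ι : S ⟶ ⨁ (fun _ : Fin n => Y)) (π : S ⟶ X),
    Mono ι ∧ Epi π

/-- `X ≈ Y` : mutual subquotient equivalence. -/
def PrecEquiv (X Y : C) : Prop := Prec C X Y ∧ Prec C Y X

/-- A nonzero object is spectral if it is `≈`-equivalent to each of its nonzero subobjects. -/
def IsSpectral (P : C) : Prop :=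
  ¬ IsZero P ∧ ∀ (Q : C) (f : Q ⟶ P), Mono f → ¬ IsZero Q → PrecEquiv C Q P

/-- The type of spectral objects of `C`. -/
def SpectralObj := {P : C // IsSpectral C P}

/-- The spectrum `𝔖pec(C)` : equivalence classes `⟨P⟩` of spectral objects. -/
def SpecPoint := Quot (fun P Q : SpectralObj C => PrecEquiv C P.1 Q.1)

/-- The point `⟨P⟩` of the spectrum attached to a spectral object `P`. -/
def pt (P : SpectralObj C) : SpecPoint C := Quot.mk _ P

/-- `Supp(M) = {⟨P⟩ : P spectral, P ≺ M}`. -/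
def supp (M : C) : Set (SpecPoint C) :=
  {x | ∃ P : SpectralObj C, pt C P = x ∧ Prec C P.1 M}

/-- `Ass(M) = {⟨P⟩ : some spectral object of class ⟨P⟩ is a subobject of M}`. -/
def ass (M : C) : Set (SpecPoint C) :=
  {x | ∃ P : SpectralObj C, pt C P = x ∧ ∃ f : P.1 ⟶ M, Mono f}

/-- A subset of the spectrum is specialization closed if together with any point `⟨P⟩`
it contains all of `Supp(P)`. -/
def SpecializationClosed (S : Set (SpecPoint C)) : Prop :=
  ∀ P : SpectralObj C, pt C P ∈ S → supp C P.1 ⊆ S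

/-- Every nonzero object of `C` has an associated point. -/
def HasAssociatedPoints : Prop :=
  ∀ M : C, ¬ IsZero M → (ass C M).Nonempty

/-- A Grothendieck category is locally noetherian if it admits a small generating family
of noetherian objects. -/
def LocallyNoetherian : Prop :=
  ∃ (ι : Type v) (G : ι → C), ObjectProperty.IsSeparating (ObjectProperty.ofObj G) ∧ ∀ i, IsNoetherianObject (G i)

/-- `0 ⟶ X ⟶ M ⟶ Y ⟶ 0` is a short exact sequence. -/
def IsShortExact {X M Y : C} (f : X ⟶ M) (g : M ⟶ Y) : Prop :=
  ∃ w : f ≫ g = 0, (ShortComplex.mk f g w).ShortExact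

/-- `f : N ⟶ M` exhibits `N` as an essential subobject of `M`. -/
def IsEssential {N M : C} (f : N ⟶ M) : Prop :=
  Mono f ∧ ∀ (K : C) (g : K ⟶ M), Mono g → ¬ IsZero K → ¬ IsZero (pullback f g)

/-- `i : P ⟶ E` exhibits `E` as an injective hull of `P`. -/
def IsInjectiveHull {P E : C} (i : P ⟶ E) : Prop :=
  Injective E ∧ IsEssential C i

/-- A torsion pair `(T, F)` on an abelian category: both classes are replete, all maps from
`T` to `F` vanish, and every object is an extension of an object of `F` by an object of `T`. -/
structure IsTorsionPair (T F : Set C) : Prop where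
  repleteT : ∀ X Y : C, X ∈ T → Nonempty (X ≅ Y) → Y ∈ T
  repleteF : ∀ X Y : C, X ∈ F → Nonempty (X ≅ Y) → Y ∈ F
  hom_zero : ∀ X ∈ T, ∀ Y ∈ F, ∀ f : X ⟶ Y, f = 0
  exists_ses : ∀ M : C, ∃ (X Y : C) (f : X ⟶ M) (g : M ⟶ Y),
    IsShortExact C f g ∧ X ∈ T ∧ Y ∈ F

end RosenbergSpec

namespace RosenbergSpec

/-!
Since `⊥` lies in `𝒞`, the ascending chain condition gives a subobject `A` of `M` that is maximal
among those lying in `𝒞`; the torsion sequence is `0 ⟶ A ⟶ M ⟶ M ⧸ A ⟶ 0`.  For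
`φ : C' ⟶ M ⧸ A` with `C' ∈ 𝒞`, the image `I` of `φ` lies in `𝒞`, and the preimage of `I` in `M`
is an extension of `I` by `A`, hence a subobject of `M` in `𝒞` containing `A`.  By maximality it
equals `A`, so `I = 0` and `φ = 0`.
-/

section

variable {B : Type u} [Category.{v} B] [Abelian B]

lemma isShortExact_arrow_cokernel_π {M : B} (A : Subobject M) :
    IsShortExact B A.arrow (cokernel.π A.arrow) :=
  ⟨cokernel.condition _,
    { exact := ShortComplex.exact_of_g_is_cokernel _ (cokernelIsCokernel _) }⟩

lemma isShortExact_pullback_lift_snd {S : ShortComplex B} (hS : S.ShortExact)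
    {I : B} (m : I ⟶ S.X₃) :
    IsShortExact B (pullback.lift S.f 0 (by rw [S.zero, zero_comp]) : S.X₁ ⟶ pullback S.g m)
      (pullback.snd S.g m) := by
  have := hS.mono_f
  have := hS.epi_g
  have : Mono (pullback.lift S.f 0 (by rw [S.zero, zero_comp]) : S.X₁ ⟶ pullback S.g m) :=
    mono_of_mono_fac (pullback.lift_fst _ _ _)
  refine ⟨pullback.lift_snd _ _ _, { exact := ShortComplex.exact_of_f_is_kernel _ ?_ }⟩
  refine KernelFork.IsLimit.ofι' _ _ fun k hk => ⟨hS.exact.lift (k ≫ pullback.fst _ _) ?_, ?_⟩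
  · rw [Category.assoc, pullback.condition, reassoc_of% hk, zero_comp]
  · apply pullback.hom_ext
    · rw [Category.assoc, pullback.lift_fst, ShortComplex.Exact.lift_f]
    · rw [Category.assoc, pullback.lift_snd, comp_zero]
      exact hk.symm

lemma forall_eq_zero_of_iso {𝒞 : Set B} {X Y : B} (hX : ∀ Z ∈ 𝒞, ∀ f : Z ⟶ X, f = 0)
    (e : X ≅ Y) : ∀ Z ∈ 𝒞, ∀ f : Z ⟶ Y, f = 0 := fun Z hZ f => by
  simpa using hX Z hZ (f ≫ e.inv) =≫ e.hom

lemma eq_zero_of_maximal_subobject_mem {𝒞 : Set B}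
    (hrep : ∀ X Y : B, X ∈ 𝒞 → Nonempty (X ≅ Y) → Y ∈ 𝒞)
    (hext : ∀ (X M Y : B) (f : X ⟶ M) (g : M ⟶ Y),
      IsShortExact B f g → X ∈ 𝒞 → Y ∈ 𝒞 → M ∈ 𝒞)
    (hquot : ∀ (X Y : B) (f : X ⟶ Y), Epi f → X ∈ 𝒞 → Y ∈ 𝒞)
    {M : B} {A : Subobject M} (hA : Maximal (fun A : Subobject M => (A : B) ∈ 𝒞) A)
    {X : B} (hX : X ∈ 𝒞) (φ : X ⟶ cokernel A.arrow) : φ = 0 := by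
  set π := cokernel.π A.arrow
  have himage : image φ ∈ 𝒞 := hquot _ _ (factorThruImage φ) inferInstance hX
  have hpullback : pullback π (image.ι φ) ∈ 𝒞 := by
    obtain ⟨_, hA_ses⟩ := isShortExact_arrow_cokernel_π A
    exact hext _ _ _ _ _ (isShortExact_pullback_lift_snd hA_ses (image.ι φ)) hA.prop himage
  have hle : A ≤ Subobject.mk (pullback.fst π (image.ι φ)) :=
    Subobject.le_mk_of_comm (pullback.lift A.arrow 0 (by simp [π])) (pullback.lift_fst _ _ _)
  have hpullback_le := hA.2 (hrep _ _ hpullback ⟨(Subobject.underlyingIso _).symm⟩) hle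
  have hfst : pullback.fst π (image.ι φ) ≫ π = 0 := by
    rw [← Subobject.ofMkLE_arrow hpullback_le, Category.assoc, cokernel.condition, comp_zero]
  have himage_ι : image.ι φ = 0 :=
    (cancel_epi (pullback.snd π (image.ι φ))).1 (by rw [← pullback.condition, hfst, comp_zero])
  rw [← image.fac φ, himage_ι, comp_zero]

end

/-- Let `B` be an abelian category in which every object is noetherian and
let `𝒞` be a full, replete subcategory containing `0`, closed under extensions and under
quotients.  Then `(𝒞, 𝒞⊥)` is a torsion pair on `B`, where
`𝒞⊥ = {N : Hom(C', N) = 0 for all C' ∈ 𝒞}`.  (In particular every object `M` fits in a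
short exact sequence `0 ⟶ X ⟶ M ⟶ Y ⟶ 0` with `X ∈ 𝒞` and `Hom(C', Y) = 0` for all
`C' ∈ 𝒞`.) -/
theorem torsion_pair_of_extension_quotient_closed
    (B : Type u) [Category.{v} B] [Abelian B]
    (hnoeth : ∀ X : B, IsNoetherianObject X)
    (𝒞 : Set B)
    (hrep : ∀ X Y : B, X ∈ 𝒞 → Nonempty (X ≅ Y) → Y ∈ 𝒞)
    (hzero : ∀ Z : B, IsZero Z → Z ∈ 𝒞)
    (hext : ∀ (X M Y : B) (f : X ⟶ M) (g : M ⟶ Y),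
      IsShortExact B f g → X ∈ 𝒞 → Y ∈ 𝒞 → M ∈ 𝒞)
    (hquot : ∀ (X Y : B) (f : X ⟶ Y), Epi f → X ∈ 𝒞 → Y ∈ 𝒞) :
    IsTorsionPair B 𝒞 {N : B | ∀ X ∈ 𝒞, ∀ f : X ⟶ N, f = 0} := by
  refine ⟨hrep, fun X Y hX ⟨e⟩ => forall_eq_zero_of_iso hX e, fun X hX Y hY f => hY X hX f,
    fun M => ?_⟩
  have hbot : ((⊥ : Subobject M) : B) ∈ 𝒞 :=
    hzero _ (IsZero.of_iso (isZero_zero B) Subobject.botCoeIsoZero)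
  obtain ⟨A, hA⟩ := exists_maximal_of_wellFoundedGT (fun A : Subobject M => (A : B) ∈ 𝒞) ⟨⊥, hbot⟩
  exact ⟨A, cokernel A.arrow, A.arrow, cokernel.π A.arrow, isShortExact_arrow_cokernel_π A,
    hA.prop, fun X hX φ => eq_zero_of_maximal_subobject_mem hrep hext hquot hA hX φ⟩

end RosenbergSpec
end

section
/- Let A be a locally noetherian Grothendieck category. Then every finitely generated object M of A has only finitely many associated points, i.e., Ass(M) is a finite set. -/
/-!
Common set-up: Rosenberg's spectrum of an abelian category.

For objects `X Y` of an abelian category `C`, `X ≺ Y` means that `X` is a subquotient of a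
finite direct sum of copies of `Y`; `X ≈ Y` means `X ≺ Y ≺ X`.  A nonzero object `P` is
*spectral* if it is `≈`-equivalent to each of its nonzero subobjects, and the spectrum
`𝔖pec(C)` is the collection of `≈`-equivalence classes `⟨P⟩` of spectral objects.
`Supp(M) = {⟨P⟩ : P ≺ M}` and `Ass(M) = {⟨P⟩ : some spectral object of class ⟨P⟩ embeds in M}`.
-/

open CategoryTheory CategoryTheory.Limits

attribute [local instance] CategoryTheory.Abelian.hasFiniteBiproducts
attribute [local instance] CategoryTheory.Limits.hasBinaryBiproducts_of_finite_biproducts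

universe v u

/-!
Take a subobject `N ⊆ M` maximal among those with finitely many associated points; it exists
because `M` is noetherian. A spectral `Q ↪ M` meeting `N` shares a nonzero subobject with `N`,
so `⟨Q⟩ ∈ Ass(N)`; one with `Q ∩ N = 0` would give the larger subobject `N ⊕ Q` with
`Ass(N ⊕ Q) ⊆ Ass(N) ∪ {⟨Q⟩}` still finite. Hence `Ass(M) = Ass(N)`.
-/

namespace RosenbergSpec

variable {C : Type u} [Category.{v} C] [Abelian C]

lemma prec_trans {X Y Z : C} (h₁ : Prec C X Y) (h₂ : Prec C Y Z) : Prec C X Z := by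
  obtain ⟨n, hn, S, ι, π, hι, hπ⟩ := h₁
  obtain ⟨m, hm, T, ι₂, π₂, hι₂, hπ₂⟩ := h₂
  let p : (⨁ fun _ : Fin n => T) ⟶ (⨁ fun _ : Fin n => Y) := biproduct.map fun _ => π₂
  let q : (⨁ fun _ : Fin n => T) ⟶ (⨁ fun _ : Fin n => ⨁ fun _ : Fin m => Z) :=
    biproduct.map fun _ => ι₂
  let e : (⨁ fun _ : Fin n => ⨁ fun _ : Fin m => Z) ≅ (⨁ fun _ : Fin (n * m) => Z) :=
    biproductBiproductIso (fun _ : Fin n => Fin m) (fun _ _ => Z) ≪≫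
      biproduct.whiskerEquiv ((Equiv.sigmaEquivProd _ _).trans finProdFinEquiv)
        fun _ => Iso.refl Z
  have : Epi (pullback.fst ι p) := Abelian.epi_pullback_of_epi_g ι p
  exact ⟨n * m, Nat.mul_pos hn hm, pullback ι p, pullback.snd ι p ≫ q ≫ e.hom,
    pullback.fst ι p ≫ π, inferInstance, epi_comp _ _⟩

lemma PrecEquiv.symm {X Y : C} (h : PrecEquiv C X Y) : PrecEquiv C Y X := ⟨h.2, h.1⟩

lemma PrecEquiv.trans {X Y Z : C} (h₁ : PrecEquiv C X Y) (h₂ : PrecEquiv C Y Z) :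
    PrecEquiv C X Z :=
  ⟨prec_trans h₁.1 h₂.1, prec_trans h₂.2 h₁.2⟩

lemma IsSpectral.of_mono {P K : C} (hP : IsSpectral C P) (i : K ⟶ P) [Mono i]
    (hK : ¬ IsZero K) : IsSpectral C K :=
  ⟨hK, fun R f _ hR =>
    (hP.2 R (f ≫ i) inferInstance hR).trans (hP.2 K i inferInstance hK).symm⟩

lemma pt_mem_ass_of_mono_of_mono (Q : SpectralObj C) {K M : C} (i : K ⟶ Q.1) [Mono i]
    (j : K ⟶ M) [Mono j] (hK : ¬ IsZero K) : pt C Q ∈ ass C M :=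
  ⟨⟨K, Q.2.of_mono i hK⟩, Quot.sound (Q.2.2 K i inferInstance hK), j, inferInstance⟩

lemma ass_subset_of_mono {X Y : C} (f : X ⟶ Y) [Mono f] : ass C X ⊆ ass C Y := by
  rintro x ⟨Q, rfl, g, hg⟩
  exact ⟨Q, rfl, g ≫ f, mono_comp _ _⟩

lemma ass_eq_empty_of_isZero {X : C} (hX : IsZero X) : ass C X = ∅ := by
  refine Set.eq_empty_of_forall_notMem ?_
  rintro x ⟨Q, rfl, g, hg⟩
  exact Q.2.1 (IsZero.of_mono g hX)

lemma ass_spectralObj_subset (P : SpectralObj C) : ass C P.1 ⊆ {pt C P} := by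
  rintro x ⟨Q, rfl, f, hf⟩
  exact Quot.sound (P.2.2 Q.1 f hf Q.2.1)

lemma ass_biprod_subset (X Y : C) : ass C (X ⊞ Y) ⊆ ass C X ∪ ass C Y := by
  rintro x ⟨Q, rfl, g, hg⟩
  by_cases hK : IsZero (kernel (g ≫ biprod.snd))
  · have : Mono (g ≫ biprod.snd) :=
      Preadditive.mono_of_kernel_zero (hK.eq_zero_of_src _)
    exact Or.inr ⟨Q, rfl, g ≫ biprod.snd, this⟩
  · have hfac : (kernel.ι (g ≫ biprod.snd) ≫ g ≫ biprod.fst) ≫ biprod.inl =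
        kernel.ι (g ≫ biprod.snd) ≫ g := by
      ext <;> simp
    have : Mono (kernel.ι (g ≫ biprod.snd) ≫ g ≫ biprod.fst) := mono_of_mono_fac hfac
    exact Or.inl (pt_mem_ass_of_mono_of_mono Q (kernel.ι _)
      (kernel.ι (g ≫ biprod.snd) ≫ g ≫ biprod.fst) hK)

lemma mono_biprod_desc_of_isZero_pullback {S Q M : C} (f : S ⟶ M) (g : Q ⟶ M)
    (h : IsZero (pullback f g)) : Mono (biprod.desc f g) := by
  refine Preadditive.mono_of_cancel_zero _ fun t ht => ?_
  have w : (t ≫ biprod.fst) ≫ f = (-(t ≫ biprod.snd)) ≫ g := by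
    rw [Preadditive.neg_comp, eq_neg_iff_add_eq_zero, ← ht, biprod.desc_eq]
    simp
  have hl : pullback.lift _ _ w = 0 := h.eq_zero_of_tgt _
  have h₁ := pullback.lift_fst _ _ w
  have h₂ := pullback.lift_snd _ _ w
  rw [hl, zero_comp] at h₁ h₂
  ext
  · simpa using h₁.symm
  · simpa using h₂.symm

lemma isZero_of_isZero_pullback_of_fac {S Q M : C} (f : S ⟶ M) (g : Q ⟶ M) (h : Q ⟶ S)
    (w : h ≫ f = g) (hz : IsZero (pullback f g)) : IsZero Q := by
  rw [IsZero.iff_id_eq_zero, ← pullback.lift_snd h (𝟙 Q) (by simpa using w),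
    hz.eq_zero_of_src (pullback.snd f g), comp_zero]

lemma mk_lt_mk_biprod_desc {S Q M : C} (f : S ⟶ M) [Mono f] (g : Q ⟶ M)
    [Mono (biprod.desc f g)] (hQ : ¬ IsZero Q) (hz : IsZero (pullback f g)) :
    Subobject.mk f < Subobject.mk (biprod.desc f g) := by
  refine lt_of_le_not_ge (Subobject.mk_le_mk_of_comm biprod.inl (biprod.inl_desc _ _))
    fun hle => hQ ?_
  refine isZero_of_isZero_pullback_of_fac f g (biprod.inr ≫ Subobject.ofMkLEMk _ _ hle) ?_ hz
  simp [Subobject.ofMkLEMk_comp]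

theorem ass_finite_of_noetherian_general
    (A : Type u) [Category.{v} A] [Abelian A]
    (M : A) (hM : IsNoetherianObject M) :
    (ass A M).Finite := by
  obtain ⟨N, hN, hmax⟩ := (wellFounded_gt (α := Subobject M)).has_min
    {N : Subobject M | (ass A (N : A)).Finite}
    ⟨⊥, by simp [ass_eq_empty_of_isZero ((isZero_zero A).of_iso Subobject.botCoeIsoZero)]⟩
  refine hN.subset ?_
  rintro _ ⟨Q, rfl, g, hg⟩
  by_cases hz : IsZero (pullback N.arrow g)
  · have : Mono (biprod.desc N.arrow g) := mono_biprod_desc_of_isZero_pullback _ _ hz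
    have hlt : N < Subobject.mk (biprod.desc N.arrow g) := by
      simpa only [Subobject.mk_arrow] using mk_lt_mk_biprod_desc N.arrow g Q.2.1 hz
    have hfin : (ass A (Subobject.mk (biprod.desc N.arrow g) : A)).Finite := by
      refine (hN.union (Set.finite_singleton (pt A Q))).subset ?_
      calc ass A (Subobject.mk (biprod.desc N.arrow g) : A)
          ⊆ ass A ((N : A) ⊞ Q.1) := ass_subset_of_mono (Subobject.underlyingIso _).hom
        _ ⊆ ass A (N : A) ∪ ass A Q.1 := ass_biprod_subset _ _
        _ ⊆ ass A (N : A) ∪ {pt A Q} :=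
          Set.union_subset_union_right _ (ass_spectralObj_subset Q)
    exact (hmax _ hfin hlt).elim
  · exact pt_mem_ass_of_mono_of_mono Q (pullback.snd N.arrow g) (pullback.fst N.arrow g) hz

/-- Let `A` be a locally noetherian Grothendieck category.  Then every
finitely generated (= noetherian) object `M` of `A` has only finitely many associated
points : `Ass(M)` is a finite set. -/
theorem ass_finite_of_noetherian
    (A : Type u) [Category.{v} A] [Abelian A] [HasColimits A] [AB5 A]
    (hln : LocallyNoetherian A)
    (M : A) (hM : IsNoetherianObject M) :
    (ass A M).Finite :=
  ass_finite_of_noetherian_general A M hM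

end RosenbergSpec
end
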